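/- Let (X,d,m) be a doubling metric measure space with supp m = X supporting a weak (1,q)-Poincaré inequality. Then there is a constant C depending only on the doubling constant and the Poincaré constant τ such that the slope of any Lipschitz function u with bounded support satisfies |∇u|(x) ≤ C |∇u|_{w,q}(x) for m-almost every x∈X. -/

import Mathlib

open Filter Set Metric MeasureTheory
open scoped ENNReal NNReal Topology unitInterval

variable {X : Type*}

/- The support of a Borel measure. -/
def msupp [MetricSpace X] [MeasurableSpace X] (m : Measure X) : Set X :=
  {x | ∀ r > 0, 0 < m (ball x r)}

/- The space of continuous curves `C([0,1], X)` with the sup distance. -/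
abbrev CurveSp (X : Type*) [MetricSpace X] := C(I, X)

noncomputable instance (X : Type*) [MetricSpace X] : MeasurableSpace (CurveSp X) :=
  borel _

/- Evaluation of a curve at time `t ∈ ℝ` (clamped to `[0,1]`). -/
noncomputable def curveAt [MetricSpace X] (γ : CurveSp X) (t : ℝ) : X :=
  γ (Set.projIcc 0 1 zero_le_one t)

/- `s` is an (integrable, nonnegative) upper speed of the curve `γ`:
`d(γ_a, γ_b) ≤ ∫_a^b s(t) dt` for all `0 ≤ a ≤ b ≤ 1`. The metric speed of an
absolutely continuous curve is its a.e. smallest upper speed. -/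
def IsUpperSpeed [MetricSpace X] (γ : CurveSp X) (s : ℝ → ℝ) : Prop :=
  (∀ t, 0 ≤ s t) ∧ IntegrableOn s (Icc 0 1) ∧
  ∀ a b : ℝ, 0 ≤ a → a ≤ b → b ≤ 1 →
    dist (curveAt γ a) (curveAt γ b) ≤ ∫ t in a..b, s t

/- The `p`-energy `∫_0^1 |γ̇_t|^p dt` of a curve (`∞` if `γ ∉ AC^p`). -/
noncomputable def pEnergy [MetricSpace X] (p : ℝ) (γ : CurveSp X) : ℝ≥0∞ :=
  ⨅ s ∈ {s : ℝ → ℝ | IsUpperSpeed γ s}, ENNReal.ofReal (∫ t in (0:ℝ)..1, s t ^ p)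

/- The length `∫_0^1 |γ̇_t| dt` of a curve (`∞` if `γ` is not absolutely continuous). -/
noncomputable def eLength [MetricSpace X] (γ : CurveSp X) : ℝ≥0∞ :=
  ⨅ s ∈ {s : ℝ → ℝ | IsUpperSpeed γ s}, ENNReal.ofReal (∫ t in (0:ℝ)..1, s t)

/- A `p`-test plan: a probability measure on `C([0,1],X)` concentrated on `AC^p` curves
with finite total `p`-energy, whose evaluations are bounded by `C(π) m`. -/
def IsTestPlan [MetricSpace X] [MeasurableSpace X] (m : Measure X) (p : ℝ)
    (π : Measure (CurveSp X)) : Prop :=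
  IsProbabilityMeasure π ∧
  (∫⁻ γ, pEnergy p γ ∂π) < ∞ ∧
  ∃ C : ℝ≥0, ∀ (t : ℝ) (B : Set X), MeasurableSet B →
    π {γ | curveAt γ t ∈ B} ≤ C * m B

/- A set of curves is `q`-negligible if it is null for every `p`-test plan
(`p` the dual exponent of `q`). -/
def QNegligible [MetricSpace X] [MeasurableSpace X] (m : Measure X) (p : ℝ)
    (N : Set (CurveSp X)) : Prop :=
  ∀ π : Measure (CurveSp X), IsTestPlan m p π → π N = 0

/- `g` is a `q`-weak upper gradient of `f` up to scale `ε`: for `q`-a.e. curve `γ`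
of length `> ε` one has `|f(γ_1) - f(γ_0)| ≤ ∫_γ g`. -/
def IsWUGUpTo [MetricSpace X] [MeasurableSpace X] (m : Measure X) (p : ℝ)
    (f g : X → ℝ) (ε : ℝ) : Prop :=
  QNegligible m p {γ : CurveSp X | ENNReal.ofReal ε < eLength γ ∧
    ¬ (∀ s : ℝ → ℝ, IsUpperSpeed γ s →
      |f (curveAt γ 1) - f (curveAt γ 0)| ≤ ∫ t in (0:ℝ)..1, g (curveAt γ t) * s t)}

/- The slope (local Lipschitz constant) `|∇u|(x) = limsup_{y→x} |u(y)-u(x)|/d(y,x)`. -/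
noncomputable def slopeR [MetricSpace X] (u : X → ℝ) (x : X) : ℝ :=
  limsup (fun y => |u y - u x| / dist y x) (nhdsWithin x {x}ᶜ)

/- **Statement 17.** In a doubling metric measure space with `supp m = X` supporting a
weak `(1,q)`-Poincaré inequality, there is `C` (depending only on the doubling constant
and the Poincaré constant `τ`) such that, for every Lipschitz `u` with bounded support,
the slope satisfies `|∇u| ≤ C |∇u|_{w,q}` `m`-a.e., where `|∇u|_{w,q}` is the minimal
`q`-weak upper gradient of `u`. -/

section AuxLemmas
variable [MetricSpace X] [MeasurableSpace X] [BorelSpace X]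

lemma auxAvgNonneg (m : Measure X) {G : X → ℝ} (hG0 : ∀ w, 0 ≤ G w) (s : Set X) :
    0 ≤ ⨍ w in s, G w ∂m := by
  rw [setAverage_eq, smul_eq_mul]
  exact mul_nonneg (by positivity) (setIntegral_nonneg_of_ae_restrict
    (Eventually.of_forall fun w => hG0 w))

lemma auxAvgDiff (m : Measure X) {u : X → ℝ}
    (hu : ∀ (z : X) (r : ℝ), IntegrableOn u (ball z r) m)
    (hpos : ∀ (z : X) (r : ℝ), 0 < r → 0 < m (ball z r))
    (hfin : ∀ (z : X) (r : ℝ), m (ball z r) ≠ ∞)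
    {z z' : X} {r r' ρ P : ℝ} (hr' : 0 < r') (hr : 0 < r)
    (hsub : ball z' r' ⊆ ball z r)
    (hρ : (m (ball z r)).toReal ≤ ρ * (m (ball z' r')).toReal)
    (hP : ⨍ w in ball z r, |u w - ⨍ v in ball z r, u v ∂m| ∂m ≤ P) (hP0 : 0 ≤ P) :
    |(⨍ w in ball z' r', u w ∂m) - ⨍ w in ball z r, u w ∂m| ≤ ρ * P := by
  set B := ball z r with hB
  set B' := ball z' r' with hB'
  set a := ⨍ w in B, u w ∂m with ha
  have hBfin : m B ≠ ∞ := hfin z r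
  have hB'fin : m B' ≠ ∞ := hfin z' r'
  have hBpos : 0 < (m B).toReal := ENNReal.toReal_pos (hpos z r hr).ne' hBfin
  have hB'pos : 0 < (m B').toReal := ENNReal.toReal_pos (hpos z' r' hr').ne' hB'fin
  have hInt : IntegrableOn (fun w => u w - a) B m := (hu z r).sub (integrableOn_const
    ((hfin z r)))
  have hInt' : IntegrableOn (fun w => u w - a) B' m := hInt.mono_set hsub
  have h1 : (⨍ w in B', u w ∂m) - a = (m B').toReal⁻¹ * ∫ w in B', (u w - a) ∂m := by
    rw [setAverage_eq, smul_eq_mul, integral_sub ((hu z' r')) (integrableOn_const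
      (hB'fin)), setIntegral_const, smul_eq_mul, measureReal_def]
    field_simp
    rfl
  have h2 : |(⨍ w in B', u w ∂m) - a| ≤ (m B').toReal⁻¹ * ∫ w in B', |u w - a| ∂m := by
    rw [h1, abs_mul, abs_of_nonneg (by positivity : (0:ℝ) ≤ (m B').toReal⁻¹)]
    gcongr
    simpa [Real.norm_eq_abs] using norm_integral_le_integral_norm (f := fun w => u w - a)
      (μ := m.restrict B')
  have h3 : ∫ w in B', |u w - a| ∂m ≤ ∫ w in B, |u w - a| ∂m := by
    apply setIntegral_mono_set hInt.abs
    · exact Eventually.of_forall fun w => abs_nonneg _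
    · exact HasSubset.Subset.eventuallyLE hsub
  have h4 : ∫ w in B, |u w - a| ∂m = (m B).toReal * ⨍ w in B, |u w - a| ∂m := by
    rw [setAverage_eq, smul_eq_mul, measureReal_def, ← mul_assoc, mul_inv_cancel₀ hBpos.ne', one_mul]
  have hρ0 : 0 ≤ ρ := by nlinarith
  calc |(⨍ w in B', u w ∂m) - a| ≤ (m B').toReal⁻¹ * ∫ w in B, |u w - a| ∂m := by
        refine h2.trans ?_; gcongr
      _ = ((m B').toReal⁻¹ * (m B).toReal) * ⨍ w in B, |u w - a| ∂m := by rw [h4]; ring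
      _ ≤ ρ * P := by
        apply mul_le_mul _ hP (auxAvgNonneg m (fun w => abs_nonneg _) B) hρ0
        rw [inv_mul_le_iff₀ hB'pos]
        linarith [hρ]

lemma auxTail (m : Measure X) {u : X → ℝ} {K : ℝ≥0} (hLip : LipschitzWith K u)
    (hu : ∀ (z : X) (r : ℝ), IntegrableOn u (ball z r) m)
    (hpos : ∀ (z : X) (r : ℝ), 0 < r → 0 < m (ball z r))
    (hfin : ∀ (z : X) (r : ℝ), m (ball z r) ≠ ∞)
    (z : X) {r : ℝ} (hr : 0 < r) :
    |u z - ⨍ w in ball z r, u w ∂m| ≤ K * r := by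
  set B := ball z r with hB
  have hBfin : m B ≠ ∞ := hfin z r
  have hBpos : 0 < (m B).toReal := ENNReal.toReal_pos (hpos z r hr).ne' hBfin
  have h1 : u z - ⨍ w in B, u w ∂m = (m B).toReal⁻¹ * ∫ w in B, (u z - u w) ∂m := by
    rw [setAverage_eq, smul_eq_mul, integral_sub (integrableOn_const
      (hBfin) : IntegrableOn (fun _ => u z) B m) (hu z r), setIntegral_const, smul_eq_mul, measureReal_def]
    field_simp
  rw [h1, abs_mul, abs_of_nonneg (by positivity : (0:ℝ) ≤ (m B).toReal⁻¹)]
  have h2 : |∫ w in B, (u z - u w) ∂m| ≤ ∫ w in B, |u z - u w| ∂m := by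
    simpa [Real.norm_eq_abs] using norm_integral_le_integral_norm
      (f := fun w => u z - u w) (μ := m.restrict B)
  have h3 : ∫ w in B, |u z - u w| ∂m ≤ ∫ w in B, (K * r : ℝ) ∂m := by
    apply setIntegral_mono_on
    · exact ((integrableOn_const (hBfin)).sub (hu z r)).abs
    · exact integrableOn_const (hBfin)
    · exact measurableSet_ball
    · intro w hw
      have := hLip.dist_le_mul z w
      rw [Real.dist_eq] at this
      refine this.trans ?_
      have : dist z w < r := by rw [dist_comm]; exact mem_ball.1 hw
      have hK : (0:ℝ) ≤ K := K.coe_nonneg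
      nlinarith [dist_nonneg (x := z) (y := w)]
  calc (m B).toReal⁻¹ * |∫ w in B, (u z - u w) ∂m|
      ≤ (m B).toReal⁻¹ * ∫ w in B, (K * r : ℝ) ∂m := by gcongr; exact h2.trans h3
    _ = (m B).toReal⁻¹ * ((m B).toReal * (K * r)) := by rw [setIntegral_const, smul_eq_mul, measureReal_def]
    _ = K * r := by field_simp

lemma auxOpenClosed (m : Measure X) {G : X → ℝ} {c₀ : ℝ} (hc₀ : 1 ≤ c₀)
    (hG0 : ∀ w, 0 ≤ G w)
    (hGi : ∀ (z : X) (r : ℝ), IntegrableOn G (ball z r) m)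
    (hpos : ∀ (z : X) (r : ℝ), 0 < r → 0 < m (ball z r))
    (hfin : ∀ (z : X) (r : ℝ), m (ball z r) ≠ ∞)
    (hdoub : ∀ (z : X) (r : ℝ), 0 < r → m (ball z (2*r)) ≤ ENNReal.ofReal c₀ * m (ball z r))
    (z : X) {r : ℝ} (hr : 0 < r) :
    ⨍ w in ball z r, G w ∂m ≤ c₀ * ⨍ w in closedBall z r, G w ∂m := by
  have hsub1 : closedBall z r ⊆ ball z (2*r) := closedBall_subset_ball (by linarith)
  have hsub2 : ball z r ⊆ closedBall z r := ball_subset_closedBall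
  have hcfin : m (closedBall z r) ≠ ∞ :=
    fun h => hfin z (2*r) (top_le_iff.1 (h ▸ measure_mono hsub1))
  have hcpos : 0 < (m (closedBall z r)).toReal :=
    ENNReal.toReal_pos (fun h => (hpos z r hr).ne' (le_antisymm (h ▸ measure_mono hsub2)
      (zero_le))) hcfin
  have hBpos : 0 < (m (ball z r)).toReal := ENNReal.toReal_pos (hpos z r hr).ne' (hfin z r)
  have hGc : IntegrableOn G (closedBall z r) m := (hGi z (2*r)).mono_set hsub1
  have hratio : (m (closedBall z r)).toReal ≤ c₀ * (m (ball z r)).toReal := by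
    have h1 : m (closedBall z r) ≤ ENNReal.ofReal c₀ * m (ball z r) :=
      (measure_mono hsub1).trans (hdoub z r hr)
    have := ENNReal.toReal_mono (by
      exact ENNReal.mul_ne_top ENNReal.ofReal_ne_top (hfin z r)) h1
    rwa [ENNReal.toReal_mul, ENNReal.toReal_ofReal (by linarith : (0:ℝ) ≤ c₀)] at this
  have hkey : (m (ball z r)).toReal⁻¹ * (m (closedBall z r)).toReal ≤ c₀ := by
    rw [inv_mul_le_iff₀ hBpos]
    nlinarith
  calc ⨍ w in ball z r, G w ∂m
      = (m (ball z r)).toReal⁻¹ * ∫ w in ball z r, G w ∂m := by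
        rw [setAverage_eq, smul_eq_mul, measureReal_def]
    _ ≤ (m (ball z r)).toReal⁻¹ * ∫ w in closedBall z r, G w ∂m := by
        refine mul_le_mul_of_nonneg_left ?_ (by positivity)
        apply setIntegral_mono_set hGc (Eventually.of_forall hG0)
          (HasSubset.Subset.eventuallyLE hsub2)
    _ = ((m (ball z r)).toReal⁻¹ * (m (closedBall z r)).toReal) *
          ⨍ w in closedBall z r, G w ∂m := by
        rw [setAverage_eq, smul_eq_mul, measureReal_def]; field_simp
    _ ≤ c₀ * ⨍ w in closedBall z r, G w ∂m := by
        apply mul_le_mul_of_nonneg_right hkey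
        rw [setAverage_eq, smul_eq_mul]
        exact mul_nonneg (by positivity)
          (setIntegral_nonneg_of_ae_restrict (Eventually.of_forall hG0))

lemma auxDoubToReal (m : Measure X) {c₀ : ℝ} (hc₀ : 1 ≤ c₀)
    (hfin : ∀ (z : X) (r : ℝ), m (ball z r) ≠ ∞)
    (hdoub : ∀ (z : X) (r : ℝ), 0 < r → m (ball z (2*r)) ≤ ENNReal.ofReal c₀ * m (ball z r))
    (z : X) {r : ℝ} (hr : 0 < r) :
    (m (ball z (2*r))).toReal ≤ c₀ * (m (ball z r)).toReal := by
  have := ENNReal.toReal_mono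
    (ENNReal.mul_ne_top ENNReal.ofReal_ne_top (hfin z r)) (hdoub z r hr)
  rwa [ENNReal.toReal_mul, ENNReal.toReal_ofReal (by linarith : (0:ℝ) ≤ c₀)] at this

lemma auxChain (m : Measure X) {u G : X → ℝ} {τ Λ q c₀ : ℝ}
    (hτ : 0 < τ) (hc₀ : 1 ≤ c₀) (hG0 : ∀ w, 0 ≤ G w)
    (hu : ∀ (z : X) (r : ℝ), IntegrableOn u (ball z r) m)
    (hpos : ∀ (z : X) (r : ℝ), 0 < r → 0 < m (ball z r))
    (hfin : ∀ (z : X) (r : ℝ), m (ball z r) ≠ ∞)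
    (hdoub : ∀ (z : X) (r : ℝ), 0 < r → m (ball z (2*r)) ≤ ENNReal.ofReal c₀ * m (ball z r))
    (hPB : ∀ (z : X) (r : ℝ), 0 < r →
      ⨍ w in ball z r, |u w - ⨍ v in ball z r, u v ∂m| ∂m ≤
        τ * r * (⨍ w in ball z (Λ * r), G w ∂m) ^ (1/q))
    (z : X) {r : ℝ} (hr : 0 < r) (N : ℕ) {M : ℝ} (hM : 0 ≤ M)
    (havg : ∀ i, i < N → (⨍ w in ball z (Λ * (r / 2^i)), G w ∂m) ^ (1/q) ≤ M) :
    |(⨍ w in ball z (r/2^N), u w ∂m) - ⨍ w in ball z r, u w ∂m| ≤ c₀ * τ * M * (2*r) := by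
  have key : ∀ N : ℕ, (∀ i, i < N → (⨍ w in ball z (Λ * (r / 2^i)), G w ∂m) ^ (1/q) ≤ M) →
      |(⨍ w in ball z (r/2^N), u w ∂m) - ⨍ w in ball z r, u w ∂m| ≤
        c₀ * τ * M * (∑ i ∈ Finset.range N, r/2^i) := by
    intro N
    induction N with
    | zero => intro _; simp
    | succ n ih =>
      intro hav
      have hrn : 0 < r / 2^n := by positivity
      have hrn1 : 0 < r / 2^(n+1) := by positivity
      have h2 : r / 2^n = 2 * (r / 2^(n+1)) := by ring
      have hsub : ball z (r / 2^(n+1)) ⊆ ball z (r / 2^n) := by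
        apply ball_subset_ball
        rw [h2]; linarith
      have hρ : (m (ball z (r/2^n))).toReal ≤ c₀ * (m (ball z (r/2^(n+1)))).toReal := by
        have := auxDoubToReal m hc₀ hfin hdoub z hrn1
        rwa [← h2] at this
      have havn : (0:ℝ) ≤ (⨍ w in ball z (Λ * (r / 2^n)), G w ∂m) ^ (1/q) :=
        Real.rpow_nonneg (auxAvgNonneg m hG0 _) _
      have hstep : |(⨍ w in ball z (r/2^(n+1)), u w ∂m) - ⨍ w in ball z (r/2^n), u w ∂m| ≤
          c₀ * (τ * (r/2^n) * (⨍ w in ball z (Λ * (r / 2^n)), G w ∂m) ^ (1/q)) :=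
        auxAvgDiff m hu hpos hfin hrn1 hrn hsub hρ (hPB z (r/2^n) hrn) (by positivity)
      have hstep2 : |(⨍ w in ball z (r/2^(n+1)), u w ∂m) - ⨍ w in ball z (r/2^n), u w ∂m| ≤
          c₀ * τ * M * (r/2^n) := by
        refine hstep.trans ?_
        have := hav n (Nat.lt_succ_self n)
        calc c₀ * (τ * (r/2^n) * (⨍ w in ball z (Λ * (r / 2^n)), G w ∂m) ^ (1/q))
            ≤ c₀ * (τ * (r/2^n) * M) := by gcongr
          _ = c₀ * τ * M * (r/2^n) := by ring
      calc |(⨍ w in ball z (r/2^(n+1)), u w ∂m) - ⨍ w in ball z r, u w ∂m|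
          ≤ |(⨍ w in ball z (r/2^(n+1)), u w ∂m) - ⨍ w in ball z (r/2^n), u w ∂m| +
            |(⨍ w in ball z (r/2^n), u w ∂m) - ⨍ w in ball z r, u w ∂m| := abs_sub_le _ _ _
        _ ≤ c₀ * τ * M * (r/2^n) + c₀ * τ * M * (∑ i ∈ Finset.range n, r/2^i) :=
            add_le_add hstep2 (ih (fun i hi => hav i (hi.trans (Nat.lt_succ_self n))))
        _ = c₀ * τ * M * (∑ i ∈ Finset.range (n+1), r/2^i) := by
            rw [Finset.sum_range_succ]; ring
  refine (key N havg).trans ?_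
  have hsum : (∑ i ∈ Finset.range N, r/2^i) ≤ 2*r := by
    have h1 : (∑ i ∈ Finset.range N, r/2^i) = r * ∑ i ∈ Finset.range N, (1/2:ℝ)^i := by
      rw [Finset.mul_sum]
      apply Finset.sum_congr rfl
      intro i _
      rw [div_pow, one_pow]
      ring
    rw [h1]
    have := sum_geometric_two_le N
    nlinarith
  have hc0 : (0:ℝ) ≤ c₀ * τ * M := mul_nonneg (mul_nonneg (by linarith) hτ.le) hM
  exact mul_le_mul_of_nonneg_left hsum hc0

end AuxLemmas

set_option maxHeartbeats 2000000 in
theorem stmt17 [MetricSpace X] [CompleteSpace X] [TopologicalSpace.SeparableSpace X]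
    [MeasurableSpace X] [BorelSpace X]
    (m : Measure X) (hfin : ∀ (x : X) (r : ℝ), m (ball x r) ≠ ∞)
    (hsupp : msupp m = univ)
    (c : ℝ)
    (hdoub : ∀ (x : X), ∀ r : ℝ, 0 < r →
      m (ball x (2 * r)) ≤ ENNReal.ofReal c * m (ball x r))
    (p q τ Λ : ℝ) (hq : 1 < q) (hpq : 1 / p + 1 / q = 1) (hτ : 0 < τ) (hΛ : 0 < Λ)
    (hPI : ∀ u g : X → ℝ, Measurable g → (∀ x, 0 ≤ g x) → IsWUGUpTo m p u g 0 →
      ∀ (x : X) (r : ℝ), 0 < r →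
        ⨍ y in ball x r, |u y - ⨍ w in ball x r, u w ∂m| ∂m ≤
          τ * r * (⨍ y in ball x (Λ * r), g y ^ q ∂m) ^ (1 / q)) :
    ∃ C : ℝ, 0 < C ∧
      ∀ (u : X → ℝ) (K : ℝ≥0), LipschitzWith K u →
        Bornology.IsBounded (Function.support u) →
        ∀ g : X → ℝ, Measurable g → (∀ x, 0 ≤ g x) →
          IsWUGUpTo m p u g 0 →
          (∀ g' : X → ℝ, Measurable g' → (∀ x, 0 ≤ g' x) → IsWUGUpTo m p u g' 0 →
            ∀ᵐ x ∂m, g x ≤ g' x) →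
          ∀ᵐ x ∂m, slopeR u x ≤ C * g x := by
  classical
  rcases isEmpty_or_nonempty X with hX | hX
  · exact ⟨1, one_pos, fun u K _ _ g _ _ _ _ =>
      Eventually.of_forall fun x => isEmptyElim x⟩
  set c₀ : ℝ := max c 1 with hc₀def
  have hc₀ : 1 ≤ c₀ := le_max_right _ _
  have hc₀0 : (0:ℝ) < c₀ := lt_of_lt_of_le one_pos hc₀
  have hdoub' : ∀ (z : X) (r : ℝ), 0 < r →
      m (ball z (2*r)) ≤ ENNReal.ofReal c₀ * m (ball z r) := fun z r hr =>
    (hdoub z r hr).trans (mul_le_mul_left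
      (ENNReal.ofReal_le_ofReal (le_max_left _ _)) _)
  have hpos : ∀ (z : X) (r : ℝ), 0 < r → 0 < m (ball z r) := by
    intro z r hr
    have hz : z ∈ msupp m := by rw [hsupp]; trivial
    exact hz r hr
  have hq0 : (0:ℝ) < q := lt_trans one_pos hq
  have hq1 : (0:ℝ) < 1/q := by positivity
  have hq1' : 1/q ≤ 1 := by rw [div_le_one hq0]; linarith
  haveI : SecondCountableTopology X := UniformSpace.secondCountable_of_separable X
  haveI : IsLocallyFiniteMeasure m :=
    ⟨fun x => ⟨ball x 1, ball_mem_nhds x one_pos, (hfin x 1).lt_top⟩⟩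
  haveI : IsUnifLocDoublingMeasure m := by
    refine ⟨⟨c₀.toNNReal^2, ?_⟩⟩
    filter_upwards [self_mem_nhdsWithin] with ε (hε : ε ∈ Ioi (0:ℝ))
    intro x
    have hε0 : (0:ℝ) < ε := hε
    calc m (closedBall x (2*ε)) ≤ m (ball x (2*(2*ε))) :=
          measure_mono (closedBall_subset_ball (by linarith))
      _ ≤ ENNReal.ofReal c₀ * m (ball x (2*ε)) := hdoub' x (2*ε) (by linarith)
      _ ≤ ENNReal.ofReal c₀ * (ENNReal.ofReal c₀ * m (ball x ε)) := by
          gcongr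
          exact hdoub' x ε hε0
      _ ≤ ↑(c₀.toNNReal^2) * m (closedBall x ε) := by
          rw [pow_two, ENNReal.coe_mul]
          have hco : (↑c₀.toNNReal : ℝ≥0∞) = ENNReal.ofReal c₀ := rfl
          rw [hco, mul_assoc]
          exact mul_le_mul_right (mul_le_mul_right
            (measure_mono ball_subset_closedBall) _) _
  have hC₂0 : (0:ℝ) < (6*c₀+2*c₀^2)*τ*c₀ := by
    apply mul_pos (mul_pos (by nlinarith) hτ) hc₀0
  refine ⟨(6*c₀+2*c₀^2)*τ*c₀ + 1, by linarith, ?_⟩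
  intro u K hLip hbdd g hg hg0 hwug hmin
  obtain ⟨x₀⟩ := hX
  -- boundedness of u
  obtain ⟨R, hR⟩ := (isBounded_iff_subset_closedBall x₀).1 hbdd
  have hubdd : ∀ y, |u y| ≤ |u x₀| + K * max R 0 := by
    intro y
    by_cases hy : u y = 0
    · rw [hy, abs_zero]; positivity
    · have hy' : y ∈ closedBall x₀ R := hR hy
      have h1 := hLip.dist_le_mul y x₀
      rw [Real.dist_eq] at h1
      have h2 : dist y x₀ ≤ R := mem_closedBall.1 hy'
      have h3 : |u y| - |u x₀| ≤ |u y - u x₀| := abs_sub_abs_le_abs_sub _ _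
      have h4 : (K:ℝ) * dist y x₀ ≤ K * max R 0 :=
        mul_le_mul_of_nonneg_left (h2.trans (le_max_left _ _)) K.coe_nonneg
      linarith
  have hu_int : ∀ (z : X) (r : ℝ), IntegrableOn u (ball z r) m := fun z r =>
    Measure.integrableOn_of_bounded (hfin z r) hLip.continuous.aestronglyMeasurable
      (Eventually.of_forall fun y => by rw [Real.norm_eq_abs]; exact hubdd y)
  -- g ≤ K a.e.
  have hwugK : IsWUGUpTo m p u (fun _ => (K:ℝ)) 0 := by
    intro π hπ
    convert measure_empty (μ := π)
    · rw [Set.eq_empty_iff_forall_notMem]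
      rintro γ ⟨-, hbad⟩
      apply hbad
      intro s hs
      have h1 : dist (curveAt γ 0) (curveAt γ 1) ≤ ∫ t in (0:ℝ)..1, s t :=
        hs.2.2 0 1 le_rfl zero_le_one le_rfl
      have h2 := hLip.dist_le_mul (curveAt γ 1) (curveAt γ 0)
      rw [Real.dist_eq] at h2
      rw [dist_comm] at h1
      calc |u (curveAt γ 1) - u (curveAt γ 0)|
          ≤ K * dist (curveAt γ 1) (curveAt γ 0) := h2
        _ ≤ K * ∫ t in (0:ℝ)..1, s t := mul_le_mul_of_nonneg_left h1 K.coe_nonneg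
        _ = ∫ t in (0:ℝ)..1, (K:ℝ) * s t := (intervalIntegral.integral_const_mul _ _).symm
  have hgK : ∀ᵐ x ∂m, g x ≤ K :=
    hmin (fun _ => (K:ℝ)) measurable_const (fun _ => K.coe_nonneg) hwugK
  -- the function g^q
  have hG0 : ∀ w, (0:ℝ) ≤ g w ^ q := fun w => Real.rpow_nonneg (hg0 w) q
  have hGmeas : Measurable (fun w => g w ^ q) := by fun_prop
  have hGbd : ∀ᵐ w ∂m, ‖g w ^ q‖ ≤ (K:ℝ)^q := by
    filter_upwards [hgK] with w hw
    rw [Real.norm_eq_abs, abs_of_nonneg (hG0 w)]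
    exact Real.rpow_le_rpow (hg0 w) hw hq0.le
  have hG_int : ∀ (z : X) (r : ℝ), IntegrableOn (fun w => g w ^ q) (ball z r) m := fun z r =>
    Measure.integrableOn_of_bounded (hfin z r) hGmeas.aestronglyMeasurable
      (ae_restrict_of_ae hGbd)
  have hG_loc : LocallyIntegrable (fun w => g w ^ q) m := fun x =>
    ⟨ball x 1, ball_mem_nhds x one_pos, hG_int x 1⟩
  have hPB : ∀ (z : X) (r : ℝ), 0 < r →
      ⨍ w in ball z r, |u w - ⨍ v in ball z r, u v ∂m| ∂m ≤
        τ * r * (⨍ w in ball z (Λ * r), g w ^ q ∂m) ^ (1/q) :=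
    fun z r hr => hPI u g hg hg0 hwug z r hr
  -- Lebesgue differentiation
  have hLeb : ∀ᵐ x ∂m, ∀ j : ℕ, ∀ (w : X → X) (δf : X → ℝ),
      Tendsto δf (nhdsWithin x {x}ᶜ) (𝓝[>](0:ℝ)) →
      (∀ᶠ y in nhdsWithin x {x}ᶜ, x ∈ closedBall (w y) ((j:ℝ) * δf y)) →
      Tendsto (fun y => ⨍ v in closedBall (w y) (δf y), g v ^ q ∂m)
        (nhdsWithin x {x}ᶜ) (𝓝 (g x ^ q)) := by
    rw [ae_all_iff]
    intro j
    filter_upwards [IsUnifLocDoublingMeasure.ae_tendsto_average (μ := m) hG_loc (j:ℝ)]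
      with x hx w δf h1 h2
    exact hx w δf h1 h2
  filter_upwards [hLeb] with x hx
  have key : ∀ (N : ℕ) (δ : ℝ), 0 < δ →
      slopeR u x ≤ 3*K*(1/2)^N + (6*c₀+2*c₀^2)*τ*c₀ * (g x ^ q + δ)^(1/q) := by
    intro N δ hδ
    have hRHS0 : (0:ℝ) ≤ 3*K*(1/2)^N + (6*c₀+2*c₀^2)*τ*c₀ * (g x ^ q + δ)^(1/q) := by
      have h1 : (0:ℝ) ≤ 3*K*(1/2)^N := by positivity
      have h2 : (0:ℝ) ≤ (g x ^ q + δ)^(1/q) :=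
        Real.rpow_nonneg (add_nonneg (hG0 x) hδ.le) _
      nlinarith [mul_nonneg hC₂0.le h2]
    rcases eq_or_ne (nhdsWithin x ({x}ᶜ : Set X)) ⊥ with hbot | hbot
    · unfold slopeR
      rw [hbot, Filter.limsup_eq]
      have hset : {a : ℝ | ∀ᶠ y in (⊥ : Filter X),
          |u y - u x| / dist y x ≤ a} = univ := by
        ext a; simp
      rw [hset, Real.sInf_of_not_bddBelow (not_bddBelow_univ)]
      exact hRHS0
    haveI : (nhdsWithin x ({x}ᶜ : Set X)).NeBot := ⟨hbot⟩
    have hdist0 : Tendsto (fun y => dist y x) (nhdsWithin x ({x}ᶜ : Set X)) (𝓝 0) := by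
      have h : Tendsto (fun y : X => dist y x) (𝓝 x) (𝓝 (dist x x)) :=
        (continuous_id.dist continuous_const).tendsto x
      rw [dist_self] at h
      exact h.mono_left nhdsWithin_le_nhds
    have hdistpos : ∀ᶠ y in nhdsWithin x ({x}ᶜ : Set X), 0 < dist y x := by
      filter_upwards [self_mem_nhdsWithin] with y hy
      exact dist_pos.2 hy
    have hscale : ∀ a : ℝ, 0 < a →
        Tendsto (fun y => a * dist y x) (nhdsWithin x ({x}ᶜ : Set X)) (𝓝[>] 0) := by
      intro a ha
      rw [tendsto_nhdsWithin_iff]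
      constructor
      · simpa using hdist0.const_mul a
      · filter_upwards [hdistpos] with y hy
        exact mul_pos ha hy
    obtain ⟨j, hj⟩ := exists_nat_ge ((2:ℝ)^N / Λ)
    have hjΛ : (2:ℝ)^N ≤ j * Λ := by
      rw [div_le_iff₀ hΛ] at hj; linarith
    have evx : ∀ i : ℕ, ∀ᶠ y in nhdsWithin x ({x}ᶜ : Set X),
        ⨍ v in closedBall x (Λ * (2 * dist y x / 2^i)), g v ^ q ∂m < g x ^ q + δ := by
      intro i
      have heq : (fun y : X => Λ * (2 * dist y x / 2^i)) =
          (fun y : X => (Λ * 2 / 2^i) * dist y x) := by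
        funext y; ring
      have htd : Tendsto (fun y : X => Λ * (2 * dist y x / 2^i))
          (nhdsWithin x ({x}ᶜ : Set X)) (𝓝[>] 0) := by
        rw [heq]; exact hscale _ (div_pos (mul_pos hΛ two_pos) (by positivity))
      have hmem : ∀ᶠ y in nhdsWithin x ({x}ᶜ : Set X),
          x ∈ closedBall x ((j:ℝ) * (Λ * (2 * dist y x / 2^i))) := by
        filter_upwards [hdistpos] with y hy
        rw [mem_closedBall, dist_self]
        exact mul_nonneg (Nat.cast_nonneg j) (le_of_lt (mul_pos hΛ
          (div_pos (by linarith) (by positivity))))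
      exact (hx j (fun _ => x) _ htd hmem).eventually_lt_const
        (lt_add_of_pos_right _ hδ)
    have evy : ∀ i : ℕ, i ≤ N → ∀ᶠ y in nhdsWithin x ({x}ᶜ : Set X),
        ⨍ v in closedBall y (Λ * (dist y x / 2^i)), g v ^ q ∂m < g x ^ q + δ := by
      intro i hi
      have heq : (fun y : X => Λ * (dist y x / 2^i)) =
          (fun y : X => (Λ / 2^i) * dist y x) := by
        funext y; ring
      have htd : Tendsto (fun y : X => Λ * (dist y x / 2^i))
          (nhdsWithin x ({x}ᶜ : Set X)) (𝓝[>] 0) := by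
        rw [heq]; exact hscale _ (div_pos hΛ (by positivity))
      have hmem : ∀ᶠ y in nhdsWithin x ({x}ᶜ : Set X),
          x ∈ closedBall y ((j:ℝ) * (Λ * (dist y x / 2^i))) := by
        filter_upwards [hdistpos] with y hy
        rw [mem_closedBall]
        have h2i : (2:ℝ)^i ≤ 2^N := by
          gcongr
          norm_num
        have heq2 : (j:ℝ) * (Λ * (dist y x / 2^i)) = (j*Λ*dist y x)/2^i := by ring
        rw [dist_comm, heq2, le_div_iff₀ (by positivity : (0:ℝ) < 2^i)]
        nlinarith [mul_le_mul_of_nonneg_left (h2i.trans hjΛ) hy.le]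
      exact (hx j id _ htd hmem).eventually_lt_const (lt_add_of_pos_right _ hδ)
    have evAll : ∀ᶠ y in nhdsWithin x ({x}ᶜ : Set X),
        (∀ i ∈ Set.Iio (N+1),
          ⨍ v in closedBall x (Λ * (2 * dist y x / 2^i)), g v ^ q ∂m < g x ^ q + δ) ∧
        (∀ i ∈ Set.Iio (N+1),
          ⨍ v in closedBall y (Λ * (dist y x / 2^i)), g v ^ q ∂m < g x ^ q + δ) ∧
        0 < dist y x := by
      refine (((eventually_all_finite (Set.finite_Iio _)).2 fun i _ => evx i).and
        (((eventually_all_finite (Set.finite_Iio _)).2 fun i hi =>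
          evy i (Nat.lt_succ_iff.1 hi)).and hdistpos))
    set M : ℝ := (c₀ * (g x ^ q + δ))^(1/q) with hM
    have hGx0 : (0:ℝ) ≤ g x ^ q := hG0 x
    have hbase0 : (0:ℝ) < c₀ * (g x ^ q + δ) :=
      mul_pos hc₀0 (add_pos_of_nonneg_of_pos (hG0 x) hδ)
    have hM0 : 0 ≤ M := Real.rpow_nonneg hbase0.le _
    have hMq : M ^ q = c₀ * (g x ^ q + δ) := by
      rw [hM, ← Real.rpow_mul hbase0.le, one_div, inv_mul_cancel₀ hq0.ne', Real.rpow_one]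
    have hMle : M ≤ c₀ * (g x ^ q + δ)^(1/q) := by
      rw [hM, Real.mul_rpow hc₀0.le (add_nonneg (hG0 x) hδ.le)]
      have h1 : c₀ ^ (1/q) ≤ c₀ ^ (1:ℝ) := Real.rpow_le_rpow_of_exponent_le hc₀ hq1'
      rw [Real.rpow_one] at h1
      exact mul_le_mul_of_nonneg_right h1 (Real.rpow_nonneg (add_nonneg (hG0 x) hδ.le) _)
    have avgle : ∀ (z : X) (ρ : ℝ), 0 < ρ →
        (⨍ v in closedBall z ρ, g v ^ q ∂m) < g x ^ q + δ →
        (⨍ v in ball z ρ, g v ^ q ∂m) ^ (1/q) ≤ M := by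
      intro z ρ hρ hcb
      have h1 : ⨍ v in ball z ρ, g v ^ q ∂m ≤ c₀ * ⨍ v in closedBall z ρ, g v ^ q ∂m :=
        auxOpenClosed m hc₀ hG0 hG_int hpos hfin hdoub' z hρ
      have h2 : ⨍ v in ball z ρ, g v ^ q ∂m ≤ c₀ * (g x ^ q + δ) :=
        h1.trans (mul_le_mul_of_nonneg_left hcb.le hc₀0.le)
      calc (⨍ v in ball z ρ, g v ^ q ∂m) ^ (1/q)
          ≤ (c₀*(g x ^ q + δ)) ^ (1/q) :=
            Real.rpow_le_rpow (auxAvgNonneg m hG0 _) h2 hq1.le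
        _ = M := hM.symm
    have evBound : ∀ᶠ y in nhdsWithin x ({x}ᶜ : Set X),
        |u y - u x| / dist y x ≤
          3*K*(1/2)^N + (6*c₀+2*c₀^2)*τ*c₀ * (g x ^ q + δ)^(1/q) := by
      filter_upwards [evAll] with y hy
      obtain ⟨hyx, hyy, hyd⟩ := hy
      have hd2 : (0:ℝ) < 2*dist y x := by linarith
      have Hx : ∀ i : ℕ, i ≤ N →
          (⨍ v in ball x (Λ * (2 * dist y x / 2^i)), g v ^ q ∂m) ^ (1/q) ≤ M :=
        fun i hi => avgle x _ (mul_pos hΛ (div_pos hd2 (by positivity)))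
          (hyx i (Nat.lt_succ_of_le hi))
      have Hy : ∀ i : ℕ, i ≤ N →
          (⨍ v in ball y (Λ * (dist y x / 2^i)), g v ^ q ∂m) ^ (1/q) ≤ M :=
        fun i hi => avgle y _ (mul_pos hΛ (div_pos hyd (by positivity)))
          (hyy i (Nat.lt_succ_of_le hi))
      have chainy : |(⨍ w in ball y (dist y x / 2^N), u w ∂m) -
          ⨍ w in ball y (dist y x), u w ∂m| ≤ c₀*τ*M*(2*dist y x) :=
        auxChain m hτ hc₀ hG0 hu_int hpos hfin hdoub' hPB y hyd N hM0
          (fun i hi => Hy i hi.le)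
      have chainx : |(⨍ w in ball x ((2*dist y x) / 2^N), u w ∂m) -
          ⨍ w in ball x (2*dist y x), u w ∂m| ≤ c₀*τ*M*(2*(2*dist y x)) :=
        auxChain m hτ hc₀ hG0 hu_int hpos hfin hdoub' hPB x hd2 N hM0
          (fun i hi => Hx i hi.le)
      have taily : |u y - ⨍ w in ball y (dist y x / 2^N), u w ∂m| ≤
          K * (dist y x / 2^N) := auxTail m hLip hu_int hpos hfin y
            (div_pos hyd (by positivity))
      have tailx : |u x - ⨍ w in ball x ((2*dist y x) / 2^N), u w ∂m| ≤
          K * ((2*dist y x) / 2^N) := auxTail m hLip hu_int hpos hfin x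
            (div_pos hd2 (by positivity))
      have hsubxy : ball y (dist y x) ⊆ ball x (2*dist y x) := by
        intro w hw
        rw [mem_ball] at hw ⊢
        have h1 := dist_triangle w y x
        linarith
      have hsubx4 : ball x (2*dist y x) ⊆ ball y (2*(2*dist y x)) := by
        intro w hw
        rw [mem_ball] at hw ⊢
        have h1 : dist w y ≤ dist w x + dist x y := dist_triangle w x y
        have h2 : dist x y = dist y x := dist_comm x y
        linarith
      have hρb : (m (ball x (2*dist y x))).toReal ≤
          c₀^2 * (m (ball y (dist y x))).toReal := by
        have h1 : (m (ball x (2*dist y x))).toReal ≤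
            (m (ball y (2*(2*dist y x)))).toReal :=
          ENNReal.toReal_mono (hfin y _) (measure_mono hsubx4)
        have h2 := auxDoubToReal m hc₀ hfin hdoub' y hd2
        have h3 := auxDoubToReal m hc₀ hfin hdoub' y hyd
        nlinarith [ENNReal.toReal_nonneg (a := m (ball y (2*dist y x)))]
      have havb0 : (0:ℝ) ≤ (⨍ w in ball x (Λ*(2*dist y x)), g w ^ q ∂m)^(1/q) :=
        Real.rpow_nonneg (auxAvgNonneg m hG0 _) _
      have bridge : |(⨍ w in ball y (dist y x), u w ∂m) -
          ⨍ w in ball x (2*dist y x), u w ∂m| ≤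
          c₀^2 * (τ * (2*dist y x) *
            (⨍ w in ball x (Λ*(2*dist y x)), g w ^ q ∂m)^(1/q)) :=
        auxAvgDiff m hu_int hpos hfin hyd hd2 hsubxy hρb
          (hPB x (2*dist y x) hd2)
          (mul_nonneg (mul_nonneg hτ.le hd2.le) havb0)
      have h0' : (⨍ v in ball x (Λ*(2*dist y x)), g v ^ q ∂m)^(1/q) ≤ M := by
        have h0 := Hx 0 (Nat.zero_le N)
        simpa using h0
      have bridge2 : |(⨍ w in ball y (dist y x), u w ∂m) -
          ⨍ w in ball x (2*dist y x), u w ∂m| ≤ c₀^2*τ*(2*dist y x)*M := by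
        refine bridge.trans ?_
        calc c₀^2 * (τ * (2*dist y x) *
              (⨍ w in ball x (Λ*(2*dist y x)), g w ^ q ∂m)^(1/q))
            ≤ c₀^2 * (τ * (2*dist y x) * M) := by gcongr
          _ = c₀^2*τ*(2*dist y x)*M := by ring
      -- triangle inequality
      have tri : |u y - u x| ≤
          K * (dist y x / 2^N) + c₀*τ*M*(2*dist y x) + c₀^2*τ*(2*dist y x)*M +
          c₀*τ*M*(2*(2*dist y x)) + K * ((2*dist y x) / 2^N) := by
        have a1 := abs_sub_le (u y) (⨍ w in ball y (dist y x / 2^N), u w ∂m) (u x)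
        have a2 := abs_sub_le (⨍ w in ball y (dist y x / 2^N), u w ∂m)
          (⨍ w in ball y (dist y x), u w ∂m) (u x)
        have a3 := abs_sub_le (⨍ w in ball y (dist y x), u w ∂m)
          (⨍ w in ball x (2*dist y x), u w ∂m) (u x)
        have a4 := abs_sub_le (⨍ w in ball x (2*dist y x), u w ∂m)
          (⨍ w in ball x ((2*dist y x) / 2^N), u w ∂m) (u x)
        have c4 : |(⨍ w in ball x (2*dist y x), u w ∂m) -
            ⨍ w in ball x ((2*dist y x) / 2^N), u w ∂m| ≤ c₀*τ*M*(2*(2*dist y x)) := by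
          rw [abs_sub_comm]; exact chainx
        have c5 : |(⨍ w in ball x ((2*dist y x) / 2^N), u w ∂m) - u x| ≤
            K * ((2*dist y x) / 2^N) := by
          rw [abs_sub_comm]; exact tailx
        linarith
      have hM' : (6*c₀+2*c₀^2)*τ*M ≤ (6*c₀+2*c₀^2)*τ*c₀*(g x ^ q + δ)^(1/q) := by
        have h60 : (0:ℝ) ≤ (6*c₀+2*c₀^2)*τ := mul_nonneg (by nlinarith) hτ.le
        calc (6*c₀+2*c₀^2)*τ*M ≤ (6*c₀+2*c₀^2)*τ*(c₀*(g x ^ q + δ)^(1/q)) :=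
              mul_le_mul_of_nonneg_left hMle h60
          _ = (6*c₀+2*c₀^2)*τ*c₀*(g x ^ q + δ)^(1/q) := by ring
      have total : |u y - u x| ≤
          (3*K*(1/2)^N + (6*c₀+2*c₀^2)*τ*c₀ * (g x ^ q + δ)^(1/q)) * dist y x := by
        have hhalf : ((1:ℝ)/2)^N = 1/2^N := by rw [div_pow, one_pow]
        have hsumeq : K * (dist y x / 2^N) + c₀*τ*M*(2*dist y x) +
            c₀^2*τ*(2*dist y x)*M + c₀*τ*M*(2*(2*dist y x)) +
            K * ((2*dist y x) / 2^N) =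
            3*K*(1/2)^N * dist y x + ((6*c₀+2*c₀^2)*τ*M) * dist y x := by
          rw [hhalf]
          field_simp
          ring
        have h2 : ((6*c₀+2*c₀^2)*τ*M) * dist y x ≤
            ((6*c₀+2*c₀^2)*τ*c₀*(g x ^ q + δ)^(1/q)) * dist y x :=
          mul_le_mul_of_nonneg_right hM' dist_nonneg
        calc |u y - u x| ≤ _ := tri
          _ = 3*K*(1/2)^N * dist y x + ((6*c₀+2*c₀^2)*τ*M) * dist y x := hsumeq
          _ ≤ 3*K*(1/2)^N * dist y x +
              ((6*c₀+2*c₀^2)*τ*c₀*(g x ^ q + δ)^(1/q)) * dist y x := by linarith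
          _ = (3*K*(1/2)^N + (6*c₀+2*c₀^2)*τ*c₀ * (g x ^ q + δ)^(1/q)) * dist y x := by
              ring
      rw [div_le_iff₀ hyd]
      exact total
    unfold slopeR
    refine Filter.limsup_le_of_le ?_ evBound
    refine isCoboundedUnder_le_of_le (nhdsWithin x ({x}ᶜ : Set X)) (x := 0) ?_
    intro y
    exact div_nonneg (abs_nonneg _) dist_nonneg
  -- pass to the limit
  have step1 : ∀ δ : ℝ, 0 < δ →
      slopeR u x ≤ (6*c₀+2*c₀^2)*τ*c₀ * (g x ^ q + δ)^(1/q) := by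
    intro δ hδ
    have hT : Tendsto (fun N : ℕ => 3*(K:ℝ)*(1/2)^N +
        (6*c₀+2*c₀^2)*τ*c₀ * (g x ^ q + δ)^(1/q)) atTop
        (𝓝 (3*(K:ℝ)*0 + (6*c₀+2*c₀^2)*τ*c₀ * (g x ^ q + δ)^(1/q))) := by
      exact (((tendsto_pow_atTop_nhds_zero_of_lt_one (by norm_num) (by norm_num)).const_mul
        (3*(K:ℝ))).add tendsto_const_nhds)
    rw [mul_zero, zero_add] at hT
    exact ge_of_tendsto' hT (fun N => key N δ hδ)
  have step2 : slopeR u x ≤ (6*c₀+2*c₀^2)*τ*c₀ * (g x ^ q)^(1/q) := by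
    have hGx0 : (0:ℝ) ≤ g x ^ q := hG0 x
    have hcont : ContinuousAt (fun δ : ℝ => (6*c₀+2*c₀^2)*τ*c₀ * (g x ^ q + δ)^(1/q)) 0 := by
      apply ContinuousAt.mul continuousAt_const
      have h1 : ContinuousAt (fun t : ℝ => t ^ (1/q)) (g x ^ q + 0) :=
        Real.continuousAt_rpow_const _ _ (Or.inr hq1.le)
      exact h1.comp (by fun_prop)
    have hT : Tendsto (fun δ : ℝ => (6*c₀+2*c₀^2)*τ*c₀ * (g x ^ q + δ)^(1/q))
        (𝓝[>] (0:ℝ)) (𝓝 ((6*c₀+2*c₀^2)*τ*c₀ * (g x ^ q + 0)^(1/q))) :=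
      hcont.tendsto.mono_left nhdsWithin_le_nhds
    rw [add_zero] at hT
    exact ge_of_tendsto hT (eventually_nhdsWithin_of_forall fun δ hδ => step1 δ hδ)
  have hGxg : (g x ^ q)^(1/q) = g x := by
    rw [← Real.rpow_mul (hg0 x), mul_one_div, div_self hq0.ne', Real.rpow_one]
  rw [hGxg] at step2
  have hgx0 := hg0 x
  nlinarith [step2, hgx0]
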